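/- The dpda M_s described satisfies (q0, a^{2^s}, Z0) ⊢* (q0, ε, Z0), and consequently L(M_s) = {a^n : 2^s divides n}, while M_s has size 8s + 4 (product-style size count: it has 4 states and 2s+1 stack symbols). -/
import Mathlib


/-- States of the dpda `M_s` for `L_s = {a^{2^s}}^*`. -/
inductive MSt where
  | q0 | q1 | q2 | q3
deriving DecidableEq

/-- Stack symbols of `M_s`: `Z0`, `A i`, `B i` (with `i ≤ s-1`). -/
inductive MSym where
  | Z0
  | A (i : ℕ)
  | B (i : ℕ)
deriving DecidableEq

/-- One move of the dpda `M_s` of the paper. Configurations are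
`(state, remaining input length, stack)` with the stack top leftmost;
reading consumes one input symbol `a`. -/
inductive MStep (s : ℕ) : MSt × ℕ × List MSym → MSt × ℕ × List MSym → Prop
  | start (n γ) :
      MStep s (.q0, n, .Z0 :: γ) (.q1, n, .A (s - 1) :: .Z0 :: γ)
  | readA (n γ) : MStep s (.q1, n + 1, .A 0 :: γ) (.q3, n, .A 0 :: γ)
  | readB (n γ) : MStep s (.q1, n + 1, .B 0 :: γ) (.q3, n, .B 0 :: γ)
  | pushAA (n γ i) : 1 ≤ i → i ≤ s - 1 →
      MStep s (.q1, n, .A i :: γ) (.q1, n, .A (i - 1) :: .A i :: γ)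
  | pushAB (n γ i) : 1 ≤ i → i ≤ s - 1 →
      MStep s (.q1, n, .B i :: γ) (.q1, n, .A (i - 1) :: .B i :: γ)
  | pushBA (n γ i) : 1 ≤ i → i ≤ s - 1 →
      MStep s (.q2, n, .A i :: γ) (.q1, n, .B (i - 1) :: .A i :: γ)
  | pushBB (n γ i) : 1 ≤ i → i ≤ s - 1 →
      MStep s (.q2, n, .B i :: γ) (.q1, n, .B (i - 1) :: .B i :: γ)
  | popA (n γ i) : i ≤ s - 1 → MStep s (.q3, n, .A i :: γ) (.q2, n, γ)
  | popB (n γ i) : i ≤ s - 1 → MStep s (.q3, n, .B i :: γ) (.q3, n, γ)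
  | wrap (n γ) :
      MStep s (.q2, n, .Z0 :: γ) (.q1, n, .B (s - 1) :: .Z0 :: γ)
  | finish (n γ) : MStep s (.q3, n, .Z0 :: γ) (.q0, n, .Z0 :: γ)

namespace MAux

/-! ### Potential function (for the "only if" direction) -/

mutual
/-- Remaining consumption (mod `2^s`) from state `q2` with the given stack. -/
def t2 (s : ℕ) : List MSym → ZMod (2 ^ s)
  | [] => 0
  | .Z0 :: _ => 2 ^ (s - 1)
  | .A i :: γ => 2 ^ (i - 1) + t2 s γ
  | .B i :: γ => 2 ^ (i - 1) + t3 s γ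
/-- Remaining consumption (mod `2^s`) from state `q3` with the given stack. -/
def t3 (s : ℕ) : List MSym → ZMod (2 ^ s)
  | [] => 0
  | .Z0 :: _ => 0
  | .A _ :: γ => t2 s γ
  | .B _ :: γ => t3 s γ
end

/-- Remaining consumption (mod `2^s`) from state `q1` with the given stack. -/
def t1 (s : ℕ) : List MSym → ZMod (2 ^ s)
  | .A i :: γ => 2 ^ i + t2 s γ
  | .B i :: γ => 2 ^ i + t3 s γ
  | _ => 0

/-- Potential of a state/stack pair. -/
def hval (s : ℕ) : MSt → List MSym → ZMod (2 ^ s)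
  | .q0, _ => 0
  | .q1, σ => t1 s σ
  | .q2, σ => t2 s σ
  | .q3, σ => t3 s σ

/-- The step invariant `n - hval`. -/
def inv (s : ℕ) (c : MSt × ℕ × List MSym) : ZMod (2 ^ s) :=
  (c.2.1 : ZMod (2 ^ s)) - hval s c.1 c.2.2

lemma two_pow_s_eq_zero (s : ℕ) : (2 : ZMod (2 ^ s)) ^ s = 0 := by
  have := ZMod.natCast_self (2 ^ s)
  push_cast at this
  exact this

lemma pow_pred_add (s : ℕ) {i : ℕ} (hi : 1 ≤ i) :
    (2 : ZMod (2 ^ s)) ^ (i - 1) + 2 ^ (i - 1) = 2 ^ i := by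
  rw [← two_mul, ← pow_succ']
  congr 1
  omega

lemma inv_step {s : ℕ} (hs : 0 < s) {c c' : MSt × ℕ × List MSym}
    (h : MStep s c c') : inv s c = inv s c' := by
  have hhalf : (2 : ZMod (2 ^ s)) ^ (s - 1) + 2 ^ (s - 1) = 0 := by
    rw [pow_pred_add s hs, two_pow_s_eq_zero]
  cases h with
  | start n γ =>
      simp only [inv, hval, t1, t2]
      rw [hhalf]
  | readA n γ =>
      simp only [inv, hval, t1, t3]
      push_cast; ring
  | readB n γ =>
      simp only [inv, hval, t1, t3]
      push_cast; ring
  | pushAA n γ i h1 h2 =>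
      simp only [inv, hval, t1, t2, t3]
      rw [← add_assoc, pow_pred_add s h1]
  | pushAB n γ i h1 h2 =>
      simp only [inv, hval, t1, t2, t3]
      rw [← add_assoc, pow_pred_add s h1]
  | pushBA n γ i h1 h2 =>
      simp only [inv, hval, t1, t2, t3]
  | pushBB n γ i h1 h2 =>
      simp only [inv, hval, t1, t2, t3]
  | popA n γ i h2 =>
      simp only [inv, hval, t3]
  | popB n γ i h2 =>
      simp only [inv, hval, t3]
  | wrap n γ =>
      simp only [inv, hval, t1, t2, t3]
      ring
  | finish n γ =>
      simp only [inv, hval, t3]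

lemma inv_rtg {s : ℕ} (hs : 0 < s) {c c' : MSt × ℕ × List MSym}
    (h : Relation.ReflTransGen (MStep s) c c') : inv s c = inv s c' := by
  induction h with
  | refl => rfl
  | tail _ hstep ih => exact ih.trans (inv_step hs hstep)

/-! ### Run construction (for the "if" direction) -/

lemma run1 {s : ℕ} (i : ℕ) (hi : i ≤ s - 1) :
    (∀ n γ, Relation.ReflTransGen (MStep s)
        (.q1, n + 2 ^ i, .A i :: γ) (.q2, n, γ)) ∧
    (∀ n γ, Relation.ReflTransGen (MStep s)
        (.q1, n + 2 ^ i, .B i :: γ) (.q3, n, γ)) := by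
  induction i with
  | zero =>
      constructor
      · intro n γ
        exact (Relation.ReflTransGen.single (MStep.readA n γ)).tail
          (MStep.popA n γ 0 (by omega))
      · intro n γ
        exact (Relation.ReflTransGen.single (MStep.readB n γ)).tail
          (MStep.popB n γ 0 (by omega))
  | succ i ih =>
      obtain ⟨ihA, ihB⟩ := ih (by omega)
      have e : ∀ n : ℕ, n + 2 ^ (i + 1) = n + 2 ^ i + 2 ^ i := by
        intro n
        have : 2 ^ (i + 1) = 2 ^ i + 2 ^ i := by rw [pow_succ]; ring
        omega
      constructor
      · intro n γ
        rw [e]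
        refine Relation.ReflTransGen.head
          (MStep.pushAA _ _ (i + 1) (by omega) hi) ?_
        refine Relation.ReflTransGen.trans (ihA (n + 2 ^ i) _) ?_
        refine Relation.ReflTransGen.head
          (MStep.pushBA _ _ (i + 1) (by omega) hi) ?_
        refine Relation.ReflTransGen.trans (ihB n _) ?_
        exact Relation.ReflTransGen.single (MStep.popA n γ (i + 1) hi)
      · intro n γ
        rw [e]
        refine Relation.ReflTransGen.head
          (MStep.pushAB _ _ (i + 1) (by omega) hi) ?_
        refine Relation.ReflTransGen.trans (ihA (n + 2 ^ i) _) ?_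
        refine Relation.ReflTransGen.head
          (MStep.pushBB _ _ (i + 1) (by omega) hi) ?_
        refine Relation.ReflTransGen.trans (ihB n _) ?_
        exact Relation.ReflTransGen.single (MStep.popB n γ (i + 1) hi)

lemma cycle {s : ℕ} (hs : 0 < s) (n : ℕ) (γ : List MSym) :
    Relation.ReflTransGen (MStep s)
      (.q0, n + 2 ^ s, .Z0 :: γ) (.q0, n, .Z0 :: γ) := by
  obtain ⟨runA, runB⟩ := run1 (s := s) (s - 1) le_rfl
  have e : n + 2 ^ s = n + 2 ^ (s - 1) + 2 ^ (s - 1) := by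
    have : 2 ^ s = 2 ^ (s - 1) + 2 ^ (s - 1) := by
      rw [← two_mul, ← pow_succ']
      congr 1
      omega
    omega
  rw [e]
  refine Relation.ReflTransGen.head (MStep.start _ _) ?_
  refine Relation.ReflTransGen.trans (runA (n + 2 ^ (s - 1)) _) ?_
  refine Relation.ReflTransGen.head (MStep.wrap _ _) ?_
  refine Relation.ReflTransGen.trans (runB n _) ?_
  exact Relation.ReflTransGen.single (MStep.finish n γ)

lemma multi {s : ℕ} (hs : 0 < s) (k : ℕ) :
    Relation.ReflTransGen (MStep s)
      (.q0, k * 2 ^ s, [.Z0]) (.q0, 0, [.Z0]) := by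
  induction k with
  | zero => simpa using Relation.ReflTransGen.refl
  | succ k ih =>
      have e : (k + 1) * 2 ^ s = k * 2 ^ s + 2 ^ s := by ring
      rw [e]
      exact (cycle hs (k * 2 ^ s) []).trans ih

end MAux

/-- `M_s` satisfies `(q0, a^{2^s}, Z0) ⊢* (q0, ε, Z0)`; consequently
(acceptance by the unique final state `q0` after consuming the whole input) the
language of `M_s` is `{a^n : 2^s ∣ n}`; and `M_s` has size `8s + 4`, the product
of its `4` states and its `2s + 1` stack symbols. -/
theorem stmt_9 (s : ℕ) (hs : 0 < s) :
    Relation.ReflTransGen (MStep s) (.q0, 2 ^ s, [.Z0]) (.q0, 0, [.Z0]) ∧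
    (∀ n : ℕ,
      (∃ γ : List MSym,
        Relation.ReflTransGen (MStep s) (.q0, n, [.Z0]) (.q0, 0, γ)) ↔
      2 ^ s ∣ n) ∧
    4 * (2 * s + 1) = 8 * s + 4 := by
  refine ⟨?_, ?_, by ring⟩
  · have := MAux.multi hs 1
    rwa [one_mul] at this
  · intro n
    constructor
    · rintro ⟨γ, hrun⟩
      have hinv := MAux.inv_rtg hs hrun
      simp only [MAux.inv, MAux.hval, Nat.cast_zero, sub_zero, sub_self] at hinv
      haveI : NeZero (2 ^ s) := ⟨by positivity⟩
      exact (ZMod.natCast_eq_zero_iff n (2 ^ s)).mp hinv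
    · rintro ⟨k, rfl⟩
      exact ⟨[.Z0], by rw [mul_comm]; exact MAux.multi hs k⟩
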